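/- arXiv:1610.03912 — 7 statements merged into one kernel-verified Lean document; each statement's English description precedes it below -/
import Mathlib

section
/- Let σ, τ be unit octonions satisfying (x(yσ))\bar{σ} = (x(yτ))\bar{τ} for all x, y ∈ O. Then (x\bar{σ})τ = x(\bar{σ}τ) for all x ∈ O. -/
noncomputable section

/-- The octonions, modeled as pairs of quaternions via the Cayley–Dickson construction. -/
abbrev Octo := Quaternion ℝ × Quaternion ℝ

/-- Cayley–Dickson product: (a,b)·(c,d) = (ac - d̄b, da + bc̄). -/
def omul (x y : Octo) : Octo :=
  (x.1 * y.1 - star y.2 * x.2, y.2 * x.1 + x.2 * star y.1)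

/-- Octonion conjugation. -/
def oconj (x : Octo) : Octo := (star x.1, -x.2)

/-- Squared norm of an octonion. -/
def onormSq (x : Octo) : ℝ := ‖x.1‖ ^ 2 + ‖x.2‖ ^ 2

lemma quat_self_mul_star (a : Quaternion ℝ) :
    a * star a = ((‖a‖ ^ 2 : ℝ) : Quaternion ℝ) := by
  rw [Quaternion.self_mul_star, Quaternion.normSq_eq_norm_mul_self, sq]

lemma quat_star_mul_self (a : Quaternion ℝ) :
    star a * a = ((‖a‖ ^ 2 : ℝ) : Quaternion ℝ) := by
  rw [Quaternion.star_mul_self, Quaternion.normSq_eq_norm_mul_self, sq]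

lemma key (τ : Octo) (hτ : onormSq τ = 1) (x : Octo) :
    omul (omul x τ) (oconj τ) = x := by
  obtain ⟨a, b⟩ := τ
  obtain ⟨x1, x2⟩ := x
  simp only [onormSq] at hτ
  have h1 : ((‖a‖ : ℝ) ^ 2 : ℝ) = 1 - ‖b‖ ^ 2 := by linarith
  simp only [omul, oconj, Prod.mk.injEq, star_neg, star_star, neg_mul, sub_mul, mul_add,
    add_mul, mul_sub, neg_sub, ← mul_assoc]
  constructor
  · rw [mul_assoc x1 a (star a), quat_self_mul_star, Quaternion.mul_coe_eq_smul,
      quat_star_mul_self, Quaternion.coe_mul_eq_smul, h1, sub_smul, one_smul]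
    abel
  · rw [mul_assoc x2 (star a) a, quat_star_mul_self, Quaternion.mul_coe_eq_smul,
      quat_self_mul_star, Quaternion.coe_mul_eq_smul, h1, sub_smul, one_smul]
    abel

lemma key2 (τ : Octo) (hτ : onormSq τ = 1) (z : Octo) :
    omul (omul z (oconj τ)) τ = z := by
  have h : onormSq (oconj τ) = 1 := by
    simpa [onormSq, oconj] using hτ
  have := key (oconj τ) h z
  simpa [oconj] using this

lemma conj_mul_self (σ : Octo) (hσ : onormSq σ = 1) :
    omul (oconj σ) σ = ((1 : Quaternion ℝ), 0) := by
  obtain ⟨a, b⟩ := σ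
  simp only [onormSq] at hσ
  simp only [omul, oconj, Prod.mk.injEq]
  constructor
  · rw [quat_star_mul_self, mul_neg, sub_neg_eq_add, quat_star_mul_self,
      ← Quaternion.coe_add, hσ, Quaternion.coe_one]
  · rw [neg_mul]
    abel

lemma mul_one' (x : Octo) : omul x ((1 : Quaternion ℝ), 0) = x := by
  simp [omul]

theorem stmt5 (σ τ : Octo) (hσ : onormSq σ = 1) (hτ : onormSq τ = 1)
    (hX : ∀ x y : Octo, omul (omul x (omul y σ)) (oconj σ) = omul (omul x (omul y τ)) (oconj τ)) :
    ∀ x : Octo, omul (omul x (oconj σ)) τ = omul x (omul (oconj σ) τ) := by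
  intro x
  have hy := hX x (oconj σ)
  rw [conj_mul_self σ hσ, mul_one'] at hy
  rw [hy, key2 τ hτ]
end
end

section
/- Write unit octonions σ = (σ_1, σ_2), τ = (τ_1, τ_2) in H × H via the Cayley–Dickson construction. If (x(yσ))\bar{σ} = (x(yτ))\bar{τ} for all x, y ∈ O, then |σ_1| = |τ_1| and |σ_2| = |τ_2|. -/
noncomputable section

theorem stmt6 (σ τ : Octo) (hσ : onormSq σ = 1) (hτ : onormSq τ = 1)
    (hX : ∀ x y : Octo, omul (omul x (omul y σ)) (oconj σ) = omul (omul x (omul y τ)) (oconj τ)) :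
    ‖σ.1‖ = ‖τ.1‖ ∧ ‖σ.2‖ = ‖τ.2‖ := by
  have h := congrArg Prod.fst
    (hX (@id (Quaternion ℝ) ⟨0, 1, 0, 0⟩, 0) (@id (Quaternion ℝ) ⟨0, 0, 1, 0⟩, 0))
  simp only [omul, oconj] at h
  have hk := congrArg QuaternionAlgebra.imK h
  simp only [Quaternion.imK_mul, Quaternion.re_mul, Quaternion.imI_mul, Quaternion.imJ_mul,
    Quaternion.imK_sub, Quaternion.re_star, Quaternion.imI_star, Quaternion.imJ_star,
    Quaternion.imK_star, Quaternion.re_neg, Quaternion.imI_neg, Quaternion.imJ_neg,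
    Quaternion.imK_neg, Quaternion.re_zero, Quaternion.imI_zero, Quaternion.imJ_zero,
    Quaternion.imK_zero, mul_zero, zero_mul, mul_one, one_mul, sub_zero, zero_sub, add_zero,
    zero_add, neg_neg, neg_zero, mul_neg, neg_mul] at hk
  dsimp only [id] at hk
  ring_nf at hk
  clear h hX
  have hn1 : ‖σ.1‖ ^ 2 = Quaternion.normSq σ.1 := by
    rw [Quaternion.normSq_eq_norm_mul_self, sq]
  have hn2 : ‖σ.2‖ ^ 2 = Quaternion.normSq σ.2 := by
    rw [Quaternion.normSq_eq_norm_mul_self, sq]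
  have hm1 : ‖τ.1‖ ^ 2 = Quaternion.normSq τ.1 := by
    rw [Quaternion.normSq_eq_norm_mul_self, sq]
  have hm2 : ‖τ.2‖ ^ 2 = Quaternion.normSq τ.2 := by
    rw [Quaternion.normSq_eq_norm_mul_self, sq]
  simp only [onormSq, hn1, hn2, hm1, hm2, Quaternion.normSq_def'] at hσ hτ
  have h1 : ‖σ.1‖ ^ 2 = ‖τ.1‖ ^ 2 := by
    rw [hn1, hm1]; simp only [Quaternion.normSq_def']; linarith
  have h2 : ‖σ.2‖ ^ 2 = ‖τ.2‖ ^ 2 := by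
    rw [hn2, hm2]; simp only [Quaternion.normSq_def']; linarith
  constructor
  · have := congrArg Real.sqrt h1
    rwa [Real.sqrt_sq (norm_nonneg _), Real.sqrt_sq (norm_nonneg _)] at this
  · have := congrArg Real.sqrt h2
    rwa [Real.sqrt_sq (norm_nonneg _), Real.sqrt_sq (norm_nonneg _)] at this
end
end

section
/- Let σ = (σ_1, σ_2) and τ = (τ_1, τ_2) be unit octonions in H × H with σ_2 ≠ 0. Then (xσ)τ = x(στ) holds for all x ∈ O if and only if the imaginary parts of σ and τ are parallel, i.e., there exist λ, μ ∈ R with τ = μ + λ·Im σ as octonions (equivalently (τ_1, τ_2) = (μ - λ\bar{σ}_1, λσ_2) for some λ, μ ∈ R). -/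
noncomputable section

/-- A quaternion commuting with everything is real. -/
lemma central_real (q : Quaternion ℝ) (h : ∀ a, a * q = q * a) :
    q = (q.re : Quaternion ℝ) := by
  have h1 := h ⟨0,1,0,0⟩
  have h2 := h ⟨0,0,1,0⟩
  rw [Quaternion.ext_iff] at h1 h2 ⊢
  erw [Quaternion.re_mul, Quaternion.re_mul, Quaternion.imI_mul, Quaternion.imI_mul,
    Quaternion.imJ_mul, Quaternion.imJ_mul, Quaternion.imK_mul, Quaternion.imK_mul] at h1 h2
  simp [Quaternion.re_mul, Quaternion.imI_mul, Quaternion.imJ_mul, Quaternion.imK_mul] at h1 h2 ⊢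
  refine ⟨?_, ?_, ?_⟩ <;> linarith [h1.1, h1.2, h2.1, h2.2]

set_option maxHeartbeats 1000000 in
theorem stmt7 (σ τ : Octo) (hσ : onormSq σ = 1) (hτ : onormSq τ = 1) (hσ2 : σ.2 ≠ 0) :
    (∀ x : Octo, omul (omul x σ) τ = omul x (omul σ τ)) ↔
      ∃ lam mu : ℝ, τ = (algebraMap ℝ (Quaternion ℝ) mu - lam • star σ.1, lam • σ.2) := by
  constructor
  · intro h
    -- Step 1: star τ.2 * σ.2 is central, hence real
    have hc : ∀ a : Quaternion ℝ, a * (star τ.2 * σ.2) = (star τ.2 * σ.2) * a := by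
      intro a
      have E := congrArg Prod.fst (h (a, 0))
      simp only [omul, mul_zero, zero_mul, sub_zero, add_zero, zero_add] at E
      linear_combination (norm := noncomm_ring) E
    have hre := central_real _ hc
    set c : ℝ := (star τ.2 * σ.2).re with hcdef
    have hst : star σ.2 * τ.2 = (c : Quaternion ℝ) := by
      have := congrArg star hre
      simpa using this
    have hn : Quaternion.normSq σ.2 ≠ 0 := Quaternion.normSq_ne_zero.mpr hσ2
    set lam : ℝ := c / Quaternion.normSq σ.2 with hlam
    have hτ2 : τ.2 = lam • σ.2 := by
      have h1 : σ.2 * (star σ.2 * τ.2) = σ.2 * (c : Quaternion ℝ) := by rw [hst]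
      rw [← mul_assoc, Quaternion.self_mul_star, Quaternion.coe_mul_eq_smul,
        ← Quaternion.coe_commutes, Quaternion.coe_mul_eq_smul] at h1
      have h2 : τ.2 = (Quaternion.normSq σ.2)⁻¹ • (c • σ.2) := by
        rw [← h1, smul_smul, inv_mul_cancel₀ hn, one_smul]
      rw [h2, smul_smul, hlam, div_eq_inv_mul]
    -- Step 2: lam • σ.1 + star τ.1 is central, hence real
    have hd : ∀ a : Quaternion ℝ, a * (lam • σ.1 + star τ.1) = (lam • σ.1 + star τ.1) * a := by
      intro a
      have E := congrArg Prod.snd (h (a, 0))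
      simp only [omul, mul_zero, zero_mul, sub_zero, add_zero, zero_add] at E
      rw [hτ2] at E
      rw [← Quaternion.coe_mul_eq_smul] at E ⊢
      apply mul_left_cancel₀ hσ2
      have k1 := Quaternion.coe_commutes lam (σ.2 * a)
      have k2 := Quaternion.coe_commutes lam σ.2
      linear_combination (norm := noncomm_ring) E - k1 * σ.1 + k2 * (σ.1 * a)
    have hre2 := central_real _ hd
    refine ⟨lam, (lam • σ.1 + star τ.1).re, ?_⟩
    have hτ1 : τ.1 = algebraMap ℝ (Quaternion ℝ) (lam • σ.1 + star τ.1).re - lam • star σ.1 := by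
      have : star τ.1 = ((lam • σ.1 + star τ.1).re : Quaternion ℝ) - lam • σ.1 := by
        rw [← hre2]; abel
      have h3 := congrArg star this
      have hsm : star (lam • σ.1) = lam • star σ.1 := by
        rw [← Quaternion.coe_mul_eq_smul, ← Quaternion.coe_mul_eq_smul, star_mul,
          Quaternion.star_coe, Quaternion.coe_commutes]
      simp only [star_sub, star_star, Quaternion.star_coe, hsm] at h3
      rw [Quaternion.algebraMap_def]
      exact h3
    rw [← hτ1, ← hτ2]
  · rintro ⟨lam, mu, rfl⟩
    intro x
    obtain ⟨a, b⟩ := x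
    obtain ⟨s, t⟩ := σ
    simp only [omul, Prod.mk.injEq]
    constructor <;>
    · rw [Quaternion.ext_iff]
      simp [Quaternion.re_mul, Quaternion.imI_mul, Quaternion.imJ_mul, Quaternion.imK_mul,
        Quaternion.re_sub, Quaternion.imI_sub, Quaternion.imJ_sub, Quaternion.imK_sub,
        Quaternion.re_add, Quaternion.imI_add, Quaternion.imJ_add, Quaternion.imK_add,
        Quaternion.re_smul, Quaternion.imI_smul, Quaternion.imJ_smul, Quaternion.imK_smul,
        Quaternion.re_star, Quaternion.imI_star, Quaternion.imJ_star, Quaternion.imK_star,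
        Quaternion.re_coe, Quaternion.imI_coe, Quaternion.imJ_coe, Quaternion.imK_coe]
      refine ⟨?_, ?_, ?_, ?_⟩ <;> ring
end
end

section
/- Let S_0,…,S_{m_1} be symmetric matrices of size n = m_1 + 2m_2 satisfying S_α = S_α³ for all α, S_α = S_β² S_α + S_α S_β² + S_β S_α S_β for all α ≠ β, and Trace(S_α S_β) = 2m_2 δ_{αβ}. Then Σ_{α,β} ‖[S_α, S_β]‖² = 6‖Σ_α S_α²‖² - 4m_2(m_1+1)(m_1+3), where ‖·‖ is the Frobenius norm. -/
open Matrix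

/-- Squared Frobenius norm of a matrix. -/
def frobSq {n : Type*} [Fintype n] (M : Matrix n n ℝ) : ℝ :=
  ∑ i, ∑ j, (M i j) ^ 2

lemma frobSq_eq_trace {n : Type*} [Fintype n] (M : Matrix n n ℝ) :
    frobSq M = (M * Mᵀ).trace := by
  simp [frobSq, Matrix.trace, Matrix.mul_apply, Matrix.diag, sq]

section helpers
variable {n : Type*} [Fintype n] [DecidableEq n]

lemma tr_ABBA (A B : Matrix n n ℝ) : (A*B*(B*A)).trace = (A^2*B^2).trace := by
  rw [show A*B*(B*A) = A*(B*B*A) from by noncomm_ring, trace_mul_comm,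
    show B*B*A*A = B^2*A^2 from by noncomm_ring, trace_mul_comm]

lemma tr_BAAB (A B : Matrix n n ℝ) : (B*A*(A*B)).trace = (A^2*B^2).trace := by
  rw [show B*A*(A*B) = B*(A*A*B) from by noncomm_ring, trace_mul_comm,
    show A*A*B*B = A^2*B^2 from by noncomm_ring]

lemma tr_BABA (A B : Matrix n n ℝ) : (B*A*(B*A)).trace = ((A*B)^2).trace := by
  rw [show B*A*(B*A) = B*(A*B*A) from by noncomm_ring, trace_mul_comm,
    show A*B*A*B = (A*B)^2 from by noncomm_ring]

end helpers

theorem stmt11 (m₁ m₂ : ℕ) (hm₁ : 0 < m₁) (hm₂ : 0 < m₂)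
    (S : Fin (m₁ + 1) → Matrix (Fin (m₁ + 2 * m₂)) (Fin (m₁ + 2 * m₂)) ℝ)
    (hsym : ∀ α, (S α)ᵀ = S α)
    (hcube : ∀ α, S α = (S α) ^ 3)
    (htriple : ∀ α β, α ≠ β → S α = (S β) ^ 2 * S α + S α * (S β) ^ 2 + S β * S α * S β)
    (htr : ∀ α β, (S α * S β).trace = if α = β then 2 * (m₂ : ℝ) else 0) :
    ∑ α, ∑ β, frobSq (S α * S β - S β * S α)
      = 6 * frobSq (∑ α, (S α) ^ 2) - 4 * m₂ * (m₁ + 1) * (m₁ + 3) := by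
  -- Expansion of the commutator norm
  have hfs : ∀ α β, frobSq (S α * S β - S β * S α)
      = 2*((S α)^2*(S β)^2).trace - 2*((S α * S β)^2).trace := by
    intro α β
    rw [frobSq_eq_trace, transpose_sub, transpose_mul, transpose_mul, hsym α, hsym β,
      mul_sub, sub_mul, sub_mul, trace_sub, trace_sub, trace_sub,
      tr_ABBA, tr_BAAB, tr_BABA,
      show S α * S β * (S α * S β) = (S α * S β)^2 from by noncomm_ring]
    ring
  -- key per-pair identity
  have key : ∀ α β, frobSq (S α * S β - S β * S α)
      = 6 * ((S α)^2 * (S β)^2).trace - (if α = β then 12*(m₂:ℝ) else 4*m₂) := by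
    intro α β
    by_cases h : α = β
    · subst h
      have h4 : ((S α)^2 * (S α)^2).trace = 2*(m₂:ℝ) := by
        have : (S α)^2 * (S α)^2 = S α * S α := by
          rw [show (S α)^2 * (S α)^2 = (S α)^3 * S α from by noncomm_ring, ← hcube α]
        rw [this, htr α α, if_pos rfl]
      have h0 : frobSq (0 : Matrix (Fin (m₁ + 2 * m₂)) (Fin (m₁ + 2 * m₂)) ℝ) = 0 := by
        simp [frobSq]
      rw [sub_self, h0, if_pos rfl, h4]; ring
    · have e1 : ((S β)^2 * S α * S α).trace = ((S α)^2 * (S β)^2).trace := by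
        rw [show (S β)^2 * S α * S α = (S β)^2 * (S α)^2 from by noncomm_ring,
          trace_mul_comm ((S β)^2) ((S α)^2)]
      have e2 : (S α * (S β)^2 * S α).trace = ((S α)^2 * (S β)^2).trace := by
        rw [show S α * (S β)^2 * S α = S α * ((S β)^2 * S α) from by noncomm_ring,
          trace_mul_comm (S α) ((S β)^2 * S α),
          show (S β)^2 * S α * S α = (S β)^2 * (S α)^2 from by noncomm_ring,
          trace_mul_comm ((S β)^2) ((S α)^2)]
      have e3 : (S β * S α * S β * S α).trace = ((S α * S β)^2).trace := by
        rw [show S β * S α * S β * S α = S β * (S α * S β * S α) from by noncomm_ring,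
          trace_mul_comm (S β) (S α * S β * S α),
          show S α * S β * S α * S β = (S α * S β)^2 from by noncomm_ring]
      have e := congrArg (fun M => (M * S α).trace) (htriple α β h)
      simp only [add_mul, trace_add] at e
      rw [htr α α, if_pos rfl, e1, e2, e3] at e
      rw [hfs α β, if_neg h]
      -- e : 2*m₂ = t + t + u
      linarith [e]
  -- sum of traces equals frobSq of the sum
  have hT : frobSq (∑ α, (S α)^2) = ∑ α, ∑ β, ((S α)^2*(S β)^2).trace := by
    rw [frobSq_eq_trace]
    have hsymsum : (∑ α, (S α)^2)ᵀ = ∑ α, (S α)^2 := by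
      simp [Matrix.transpose_sum, Matrix.transpose_pow, hsym]
    rw [hsymsum, Finset.sum_mul]
    simp_rw [Finset.mul_sum]
    rw [trace_sum]
    exact Finset.sum_congr rfl fun α _ => trace_sum _ _
  -- the constant sums
  have hc : ∀ α : Fin (m₁+1), ∑ β : Fin (m₁+1), (if α = β then (12:ℝ)*m₂ else 4*m₂)
      = 8*m₂ + (m₁+1)*(4*m₂) := by
    intro α
    have h1 : ∀ β : Fin (m₁+1), (if α = β then (12:ℝ)*m₂ else 4*m₂)
        = (if α = β then (8:ℝ)*m₂ else 0) + 4*m₂ := by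
      intro β; split_ifs <;> ring
    simp_rw [h1, Finset.sum_add_distrib, Finset.sum_ite_eq, Finset.sum_const]
    simp [Finset.card_univ]
  calc ∑ α, ∑ β, frobSq (S α * S β - S β * S α)
      = ∑ α, ∑ β, (6 * ((S α)^2 * (S β)^2).trace - (if α = β then 12*(m₂:ℝ) else 4*m₂)) := by
        exact Finset.sum_congr rfl fun α _ => Finset.sum_congr rfl fun β _ => key α β
    _ = 6 * (∑ α, ∑ β, ((S α)^2*(S β)^2).trace)
        - ∑ α : Fin (m₁+1), (8*(m₂:ℝ) + (m₁+1)*(4*m₂)) := by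
        simp_rw [Finset.sum_sub_distrib, hc, Finset.mul_sum]
    _ = 6 * frobSq (∑ α, (S α) ^ 2) - 4 * m₂ * (m₁ + 1) * (m₁ + 3) := by
        rw [hT, Finset.sum_const, Finset.card_univ, Fintype.card_fin]
        push_cast
        ring
end

section
/- Let P_0,…,P_3 be a symmetric Clifford system on R^{2l}. A point x ∈ S^{2l-1} satisfies P_0P_1P_2P_3 x = ±x if and only if x lies in E_+(P_0P_1P_2P_3) ∪ E_-(P_0P_1P_2P_3), and every such x satisfies ⟨P_α x, x⟩ = 0 for all α = 0,…,3 (hence lies in the focal submanifold M_+). -/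
open Matrix

theorem stmt13 (l : ℕ) (P : Fin 4 → Matrix (Fin (2 * l)) (Fin (2 * l)) ℝ)
    (hsym : ∀ α, (P α)ᵀ = P α)
    (hcl : ∀ α β, P α * P β + P β * P α = if α = β then (2 : ℝ) • 1 else 0)
    (x : Fin (2 * l) → ℝ) (hx : x ⬝ᵥ x = 1) :
    (((P 0 * P 1 * P 2 * P 3).mulVec x = x ∨ (P 0 * P 1 * P 2 * P 3).mulVec x = -x) ↔
      (x ∈ Module.End.eigenspace (Matrix.toLin' (P 0 * P 1 * P 2 * P 3)) 1 ∨
       x ∈ Module.End.eigenspace (Matrix.toLin' (P 0 * P 1 * P 2 * P 3)) (-1))) ∧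
    (((P 0 * P 1 * P 2 * P 3).mulVec x = x ∨ (P 0 * P 1 * P 2 * P 3).mulVec x = -x) →
      ∀ α, (P α).mulVec x ⬝ᵥ x = 0) := by
  have sq : ∀ α, P α * P α = 1 := by
    intro α
    have h := hcl α α
    rw [if_pos rfl] at h
    have h2 : (2:ℝ) • (P α * P α) = (2:ℝ) • (1 : Matrix (Fin (2*l)) (Fin (2*l)) ℝ) := by
      rw [two_smul]; exact h
    exact smul_right_injective _ (two_ne_zero) h2
  have swap : ∀ α β : Fin 4, ¬(α = β) → P β * P α = -(P α * P β) := by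
    intro α β h
    have h2 := hcl α β
    rw [if_neg h] at h2
    exact eq_neg_of_add_eq_zero_right h2
  have swap' : ∀ α β : Fin 4, ¬(α = β) → ∀ y, P β * (P α * y) = -(P α * (P β * y)) := by
    intro α β h y
    rw [← mul_assoc, swap α β h, neg_mul, mul_assoc]
  have sq' : ∀ α, ∀ y, P α * (P α * y) = y := by
    intro α y; rw [← mul_assoc, sq, one_mul]
  have s01 := swap' 0 1 (by decide)
  have s02 := swap' 0 2 (by decide)
  have s03 := swap' 0 3 (by decide)
  have s12 := swap' 1 2 (by decide)
  have s13 := swap' 1 3 (by decide)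
  have s23 := swap' 2 3 (by decide)
  have t01 := swap 0 1 (by decide)
  have t02 := swap 0 2 (by decide)
  have t03 := swap 0 3 (by decide)
  have t12 := swap 1 2 (by decide)
  have t13 := swap 1 3 (by decide)
  have t23 := swap 2 3 (by decide)
  have hQt : (P 0 * P 1 * P 2 * P 3)ᵀ = P 3 * (P 2 * (P 1 * P 0)) := by
    simp [transpose_mul, hsym, mul_assoc]
  have key : ∀ γ : Fin 4, (P 3 * (P 2 * (P 1 * P 0))) * (P γ * (P 0 * P 1 * P 2 * P 3)) = -(P γ) → (P 0 * P 1 * P 2 * P 3)ᵀ * (P γ * (P 0 * P 1 * P 2 * P 3)) = -(P γ) := by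
    intro γ h; rw [hQt]; exact h
  have hkey0 := key 0 (by
    simp only [mul_assoc, s01, s02, s03, s12, s13, s23, sq' 0, sq' 1, sq' 2,
      sq' 3, t01, t02, t03, t12, t13, t23, sq, mul_neg, neg_mul, neg_neg, mul_one, one_mul])
  have hkey1 := key 1 (by
    simp only [mul_assoc, s01, s02, s03, s12, s13, s23, sq' 0, sq' 1, sq' 2,
      sq' 3, t01, t02, t03, t12, t13, t23, sq, mul_neg, neg_mul, neg_neg, mul_one, one_mul])
  have hkey2 := key 2 (by
    simp only [mul_assoc, s01, s02, s03, s12, s13, s23, sq' 0, sq' 1, sq' 2,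
      sq' 3, t01, t02, t03, t12, t13, t23, sq, mul_neg, neg_mul, neg_neg, mul_one, one_mul])
  have hkey3 := key 3 (by
    simp only [mul_assoc, s01, s02, s03, s12, s13, s23, sq' 0, sq' 1, sq' 2,
      sq' 3, t01, t02, t03, t12, t13, t23, sq, mul_neg, neg_mul, neg_neg, mul_one, one_mul])
  have hkey : ∀ α, (P 0 * P 1 * P 2 * P 3)ᵀ * (P α * (P 0 * P 1 * P 2 * P 3)) = -(P α) := by
    intro α
    fin_cases α
    exacts [hkey0, hkey1, hkey2, hkey3]
  constructor
  · simp only [Module.End.mem_eigenspace_iff, Matrix.toLin'_apply, one_smul, neg_smul]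
  · rintro h α
    obtain ⟨ε, hε, hε2⟩ : ∃ ε : ℝ, (P 0 * P 1 * P 2 * P 3).mulVec x = ε • x ∧ ε * ε = 1 := by
      rcases h with h | h
      · exact ⟨1, by simpa using h, by norm_num⟩
      · exact ⟨-1, by simpa using h, by norm_num⟩
    have h1 : (P α).mulVec x ⬝ᵥ x
        = ((P α * (P 0 * P 1 * P 2 * P 3)).mulVec x) ⬝ᵥ ((P 0 * P 1 * P 2 * P 3).mulVec x) := by
      rw [← mulVec_mulVec, hε]
      rw [Matrix.mulVec_smul, smul_dotProduct, dotProduct_smul, smul_eq_mul, smul_eq_mul,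
        ← mul_assoc, hε2, one_mul]
    have h2 : ((P α * (P 0 * P 1 * P 2 * P 3)).mulVec x) ⬝ᵥ ((P 0 * P 1 * P 2 * P 3).mulVec x)
        = (((P 0 * P 1 * P 2 * P 3)ᵀ * (P α * (P 0 * P 1 * P 2 * P 3))).mulVec x) ⬝ᵥ x := by
      rw [Matrix.dotProduct_mulVec, ← Matrix.mulVec_transpose, mulVec_mulVec]
    rw [hkey, Matrix.neg_mulVec, neg_dotProduct] at h2
    have := h1.trans h2
    linarith
end

section
/- Let P_0,…,P_8 be a symmetric Clifford system on R^{32} with P := P_0⋯P_8 ≠ ±Id. If x ∈ S^{31} satisfies both Σ_α ⟨P_α x, x⟩² = 1 and Σ_α ⟨P_α P x, x⟩² = 1, then Px = x or Px = -x. -/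
open Matrix

private def tri : ℕ → ℕ
  | 0 => 0
  | n + 1 => n + tri n

section aux

variable {P : Fin 9 → Matrix (Fin 32) (Fin 32) ℝ}

private lemma aux_move (hswap : ∀ α β : Fin 9, α ≠ β → P α * P β = -(P β * P α))
    (l : List (Fin 9)) (α : Fin 9) (h : α ∉ l) :
    (l.map P).prod * P α = ((-1 : ℝ)) ^ l.length • (P α * (l.map P).prod) := by
  induction l with
  | nil => simp
  | cons b l ih =>
    have hb : α ≠ b := fun e => h (e ▸ (List.mem_cons_self : b ∈ b :: l))
    have hl : α ∉ l := fun e => h (List.mem_cons_of_mem _ e)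
    calc ((b :: l).map P).prod * P α
        = P b * ((l.map P).prod * P α) := by simp [mul_assoc]
      _ = P b * (((-1 : ℝ)) ^ l.length • (P α * (l.map P).prod)) := by rw [ih hl]
      _ = ((-1 : ℝ)) ^ l.length • ((P b * P α) * (l.map P).prod) := by
          rw [mul_smul_comm, mul_assoc]
      _ = ((-1 : ℝ)) ^ l.length • ((-(P α * P b)) * (l.map P).prod) := by
          rw [hswap b α hb.symm]
      _ = ((-1 : ℝ)) ^ (b :: l).length • (P α * ((b :: l).map P).prod) := by
          simp [pow_succ, mul_assoc, neg_smul, smul_smul, mul_comm]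
  
private lemma aux_sq (hswap : ∀ α β : Fin 9, α ≠ β → P α * P β = -(P β * P α))
    (hsq : ∀ α, P α * P α = 1)
    (l : List (Fin 9)) (hnd : l.Nodup) :
    (l.map P).prod * (l.map P).prod = ((-1 : ℝ)) ^ (tri l.length) • 1 := by
  induction l with
  | nil => simp [tri]
  | cons b l ih =>
    obtain ⟨hb, hnd'⟩ := List.nodup_cons.mp hnd
    calc ((b :: l).map P).prod * ((b :: l).map P).prod
        = P b * (((l.map P).prod * P b) * (l.map P).prod) := by simp [mul_assoc]
      _ = P b * ((((-1 : ℝ)) ^ l.length • (P b * (l.map P).prod)) * (l.map P).prod) := by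
          rw [aux_move hswap l b hb]
      _ = ((-1 : ℝ)) ^ l.length • ((P b * P b) * ((l.map P).prod * (l.map P).prod)) := by
          simp [smul_mul_assoc, mul_smul_comm, mul_assoc]
      _ = ((-1 : ℝ)) ^ l.length • ((l.map P).prod * (l.map P).prod) := by rw [hsq]; simp
      _ = ((-1 : ℝ)) ^ (tri (b :: l).length) • 1 := by
          rw [ih hnd']; simp [tri, pow_add, smul_smul]

private lemma aux_rev (hsq : ∀ α, P α * P α = 1) (l : List (Fin 9)) :
    ((l.map P).reverse).prod * (l.map P).prod = 1 := by
  induction l with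
  | nil => simp
  | cons b l ih =>
    calc (((b :: l).map P).reverse).prod * ((b :: l).map P).prod
        = ((l.map P).reverse).prod * ((P b * P b) * (l.map P).prod) := by
          simp [List.prod_append, mul_assoc]
      _ = 1 := by rw [hsq]; simpa using ih

private lemma aux_move_mem (hswap : ∀ α β : Fin 9, α ≠ β → P α * P β = -(P β * P α))
    (hsq : ∀ α, P α * P α = 1)
    (l : List (Fin 9)) (α : Fin 9) (hnd : l.Nodup) (h : α ∈ l) :
    (l.map P).prod * P α = ((-1 : ℝ)) ^ (l.length - 1) • (P α * (l.map P).prod) := by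
  induction l with
  | nil => simp at h
  | cons b l ih =>
    obtain ⟨hb, hnd'⟩ := List.nodup_cons.mp hnd
    rcases List.mem_cons.mp h with h1 | h1
    · subst h1
      calc ((α :: l).map P).prod * P α
          = P α * ((l.map P).prod * P α) := by simp [mul_assoc]
        _ = ((-1 : ℝ)) ^ l.length • (P α * (P α * (l.map P).prod)) := by
            rw [aux_move hswap l α hb, mul_smul_comm]
        _ = ((-1 : ℝ)) ^ ((α :: l).length - 1) • (P α * ((α :: l).map P).prod) := by
            simp [mul_assoc]
    · have hne : α ≠ b := by rintro rfl; exact hb h1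
      have hpos : l.length - 1 + 1 = l.length :=
        Nat.succ_pred_eq_of_pos (List.length_pos_iff.mpr (List.ne_nil_of_mem h1))
      calc ((b :: l).map P).prod * P α
          = P b * ((l.map P).prod * P α) := by simp [mul_assoc]
        _ = ((-1 : ℝ)) ^ (l.length - 1) • ((P b * P α) * (l.map P).prod) := by
            rw [ih hnd' h1, mul_smul_comm, mul_assoc]
        _ = ((-1 : ℝ)) ^ (l.length - 1) • ((-(P α * P b)) * (l.map P).prod) := by
            rw [hswap b α hne.symm]
        _ = (((-1 : ℝ)) ^ (l.length - 1) * (-1)) • (P α * ((b :: l).map P).prod) := by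
            simp [mul_assoc, neg_smul, smul_smul, mul_comm]
        _ = ((-1 : ℝ)) ^ ((b :: l).length - 1) • (P α * ((b :: l).map P).prod) := by
            rw [← pow_succ, hpos]; simp

end aux

theorem stmt14 (P : Fin 9 → Matrix (Fin 32) (Fin 32) ℝ)
    (hsym : ∀ α, (P α)ᵀ = P α)
    (hcl : ∀ α β, P α * P β + P β * P α = if α = β then (2 : ℝ) • 1 else 0)
    (Pr : Matrix (Fin 32) (Fin 32) ℝ)
    (hPr : Pr = P 0 * P 1 * P 2 * P 3 * P 4 * P 5 * P 6 * P 7 * P 8)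
    (hind : Pr ≠ 1 ∧ Pr ≠ -1)
    (x : Fin 32 → ℝ) (hx : x ⬝ᵥ x = 1)
    (hI : ∑ α, ((P α).mulVec x ⬝ᵥ x) ^ 2 = 1)
    (hD : ∑ α, ((P α * Pr).mulVec x ⬝ᵥ x) ^ 2 = 1) :
    Pr.mulVec x = x ∨ Pr.mulVec x = -x := by
  classical
  -- basic consequences of the Clifford relations
  have hsq : ∀ α, P α * P α = 1 := by
    intro α
    have h := hcl α α
    rw [if_pos rfl] at h
    have : (2 : ℝ) • (P α * P α) = (2 : ℝ) • (1 : Matrix (Fin 32) (Fin 32) ℝ) := by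
      rw [two_smul]; exact h
    exact smul_right_injective _ (two_ne_zero) this
  have hswap : ∀ α β : Fin 9, α ≠ β → P α * P β = -(P β * P α) := by
    intro α β hab
    have h := hcl α β
    rw [if_neg hab] at h
    exact eq_neg_of_add_eq_zero_left h
  -- Pr as a list product
  set l₀ : List (Fin 9) := [0, 1, 2, 3, 4, 5, 6, 7, 8] with hl₀
  have hPr' : Pr = (l₀.map P).prod := by
    rw [hPr]; simp [hl₀, mul_assoc]
  have hPr2 : Pr * Pr = 1 := by
    rw [hPr', aux_sq hswap hsq l₀ (by decide)]
    norm_num [hl₀, tri]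
  have hPrT : Prᵀ = Pr := by
    have hrev : ((l₀.map P).prod)ᵀ = ((l₀.map P).reverse).prod := by
      rw [Matrix.transpose_list_prod]
      congr 1
      rw [List.map_map]
      simp [Function.comp_def, hsym]
    have h1 : Prᵀ * Pr = 1 := by
      rw [hPr', hrev, aux_rev hsq]
    calc Prᵀ = Prᵀ * (Pr * Pr) := by rw [hPr2, mul_one]
      _ = (Prᵀ * Pr) * Pr := by rw [mul_assoc]
      _ = Pr := by rw [h1, one_mul]
  have hcomm : ∀ α, P α * Pr = Pr * P α := by
    intro α
    have hmem : α ∈ l₀ := by fin_cases α <;> decide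
    have := aux_move_mem hswap hsq l₀ α (by decide) hmem
    rw [← hPr'] at this
    rw [this]
    norm_num [hl₀]
  -- coefficients
  set a : Fin 9 → ℝ := fun α => (P α).mulVec x ⬝ᵥ x with ha
  set b : Fin 9 → ℝ := fun α => (P α * Pr).mulVec x ⬝ᵥ x with hb
  have ha1 : ∑ α, a α * a α = 1 := by
    rw [← hI]; exact Finset.sum_congr rfl fun α _ => (sq (a α)).symm
  have hb1 : ∑ α, b α * b α = 1 := by
    rw [← hD]; exact Finset.sum_congr rfl fun α _ => (sq (b α)).symm
  -- key algebraic identity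
  have key : ∀ c d : Fin 9 → ℝ,
      (∑ α, c α • P α) * (∑ α, d α • P α) + (∑ α, d α • P α) * (∑ α, c α • P α)
        = (2 * ∑ α, c α * d α) • (1 : Matrix (Fin 32) (Fin 32) ℝ) := by
    intro c d
    rw [Finset.sum_mul_sum, Finset.sum_mul_sum]
    rw [Finset.sum_comm (f := fun i j => d i • P i * (c j • P j))]
    rw [← Finset.sum_add_distrib]
    have step : ∀ α : Fin 9,
        (∑ β, c α • P α * (d β • P β)) + (∑ β, d β • P β * (c α • P α))
          = (2 * (c α * d α)) • (1 : Matrix (Fin 32) (Fin 32) ℝ) := by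
      intro α
      rw [← Finset.sum_add_distrib]
      have : ∀ β : Fin 9, c α • P α * (d β • P β) + d β • P β * (c α • P α)
          = (c α * d β) • (if α = β then ((2:ℝ) • (1 : Matrix (Fin 32) (Fin 32) ℝ)) else 0) := by
        intro β
        rw [smul_mul_assoc, mul_smul_comm, smul_smul, smul_mul_assoc, mul_smul_comm,
          smul_smul, mul_comm (d β) (c α), ← smul_add, hcl]
      simp_rw [this]
      simp only [smul_ite, smul_zero]
      rw [Finset.sum_ite_eq (Finset.univ) α
        (fun β => (c α * d β) • ((2:ℝ) • (1 : Matrix (Fin 32) (Fin 32) ℝ)))]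
      simp [smul_smul, mul_comm]
    simp_rw [step]
    rw [← Finset.sum_smul, Finset.mul_sum]
  -- sum of matrices applied to a vector
  have hsmv : ∀ (M : Fin 9 → Matrix (Fin 32) (Fin 32) ℝ) (v : Fin 32 → ℝ),
      (∑ α, M α).mulVec v = ∑ α, (M α).mulVec v := by
    intro M v
    ext i
    simp only [Matrix.mulVec, dotProduct, Finset.sum_apply, Matrix.sum_apply,
      Finset.sum_mul]
    exact Finset.sum_comm
  have hsdp : ∀ (f : Fin 9 → Fin 32 → ℝ), (∑ α, f α) ⬝ᵥ x = ∑ α, f α ⬝ᵥ x := by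
    intro f
    simp only [dotProduct, Finset.sum_apply, Finset.sum_mul]
    exact Finset.sum_comm
  set A : Matrix (Fin 32) (Fin 32) ℝ := ∑ α, a α • P α with hA
  set B : Matrix (Fin 32) (Fin 32) ℝ := ∑ α, b α • P α with hB
  have hAT : Aᵀ = A := by
    rw [hA, Matrix.transpose_sum]
    exact Finset.sum_congr rfl fun α _ => by rw [Matrix.transpose_smul, hsym]
  have hBT : Bᵀ = B := by
    rw [hB, Matrix.transpose_sum]
    exact Finset.sum_congr rfl fun α _ => by rw [Matrix.transpose_smul, hsym]
  have hAA : A * A = 1 := by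
    have h2 := key a a
    rw [ha1, mul_one, ← hA, ← two_smul ℝ (A * A)] at h2
    exact smul_right_injective _ two_ne_zero h2
  have hBB : B * B = 1 := by
    have h2 := key b b
    rw [hb1, mul_one, ← hB, ← two_smul ℝ (B * B)] at h2
    exact smul_right_injective _ two_ne_zero h2
  -- unit-norm eigenvector argument
  have eig : ∀ (M : Matrix (Fin 32) (Fin 32) ℝ), Mᵀ = M → M * M = 1 →
      M.mulVec x ⬝ᵥ x = 1 → M.mulVec x = x := by
    intro M hMT hMM h1
    have h2 : M.mulVec x ⬝ᵥ M.mulVec x = 1 := by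
      rw [Matrix.dotProduct_mulVec, ← Matrix.mulVec_transpose, hMT,
        Matrix.mulVec_mulVec, hMM, Matrix.one_mulVec, hx]
    have h3 : (M.mulVec x - x) ⬝ᵥ (M.mulVec x - x) = 0 := by
      have h4 : x ⬝ᵥ M.mulVec x = 1 := by rw [dotProduct_comm]; exact h1
      rw [sub_dotProduct, dotProduct_sub, dotProduct_sub,
        h1, h2, hx, h4]
      ring
    have := dotProduct_self_eq_zero.mp h3
    exact sub_eq_zero.mp this
  have hAx : A.mulVec x = x := by
    apply eig A hAT hAA
    rw [hA, hsmv, hsdp, ← ha1]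
    exact Finset.sum_congr rfl fun α _ => by
      rw [Matrix.smul_mulVec, smul_dotProduct, smul_eq_mul]
  have hBPcomm : B * Pr = Pr * B := by
    rw [hB, Finset.sum_mul, Finset.mul_sum]
    exact Finset.sum_congr rfl fun α _ => by
      rw [smul_mul_assoc, mul_smul_comm, hcomm]
  have hAPcomm : A * Pr = Pr * A := by
    rw [hA, Finset.sum_mul, Finset.mul_sum]
    exact Finset.sum_congr rfl fun α _ => by
      rw [smul_mul_assoc, mul_smul_comm, hcomm]
  have hB'x : (B * Pr).mulVec x = x := by
    apply eig
    · rw [Matrix.transpose_mul, hPrT, hBT, hBPcomm]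
    · calc B * Pr * (B * Pr) = B * (Pr * B) * Pr := by simp [mul_assoc]
        _ = B * (B * Pr) * Pr := by rw [hBPcomm]
        _ = (B * B) * (Pr * Pr) := by simp [mul_assoc]
        _ = 1 := by rw [hBB, hPr2, one_mul]
    · have : B * Pr = ∑ α, b α • (P α * Pr) := by
        rw [hB, Finset.sum_mul]
        exact Finset.sum_congr rfl fun α _ => (smul_mul_assoc _ _ _)
      rw [this, hsmv, hsdp, ← hb1]
      exact Finset.sum_congr rfl fun α _ => by
        rw [Matrix.smul_mulVec, smul_dotProduct, smul_eq_mul]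
  -- actions on x and Pr x
  have hAPx : A.mulVec (Pr.mulVec x) = Pr.mulVec x := by
    rw [Matrix.mulVec_mulVec, hAPcomm, ← Matrix.mulVec_mulVec, hAx]
  have hBPx : B.mulVec (Pr.mulVec x) = x := by
    rw [Matrix.mulVec_mulVec]; exact hB'x
  have hBx : B.mulVec x = Pr.mulVec x := by
    have h1 : Pr.mulVec (B.mulVec (Pr.mulVec x)) = Pr.mulVec x := by rw [hBPx]
    calc B.mulVec x = B.mulVec ((Pr * Pr).mulVec x) := by rw [hPr2, Matrix.one_mulVec]
      _ = ((B * Pr) * Pr).mulVec x := by rw [← Matrix.mulVec_mulVec, ← Matrix.mulVec_mulVec, Matrix.mulVec_mulVec]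
      _ = ((Pr * B) * Pr).mulVec x := by rw [hBPcomm]
      _ = Pr.mulVec (B.mulVec (Pr.mulVec x)) := by
          rw [← Matrix.mulVec_mulVec, ← Matrix.mulVec_mulVec]
      _ = Pr.mulVec x := h1
  set c : ℝ := ∑ α, a α * b α with hc
  have hABBA : A * B + B * A = (2 * c) • (1 : Matrix (Fin 32) (Fin 32) ℝ) := key a b
  set u : Fin 32 → ℝ := x + Pr.mulVec x with hu
  set v : Fin 32 → ℝ := x - Pr.mulVec x with hv
  have hAu : A.mulVec u = u := by rw [hu, Matrix.mulVec_add, hAx, hAPx]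
  have hAv : A.mulVec v = v := by rw [hv, Matrix.mulVec_sub, hAx, hAPx]
  have hBu : B.mulVec u = u := by
    rw [hu, Matrix.mulVec_add, hBx, hBPx]; abel
  have hBv : B.mulVec v = -v := by
    rw [hv, Matrix.mulVec_sub, hBx, hBPx, neg_sub]
  have hcu : (2 * c) • u = u + u := by
    have h1 : (A * B + B * A).mulVec u = (2 * c) • u := by
      rw [hABBA, Matrix.smul_mulVec, Matrix.one_mulVec]
    rw [Matrix.add_mulVec, ← Matrix.mulVec_mulVec, ← Matrix.mulVec_mulVec,
      hBu, hAu, hBu] at h1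
    exact h1.symm
  have hcv : (2 * c) • v = -v + -v := by
    have h1 : (A * B + B * A).mulVec v = (2 * c) • v := by
      rw [hABBA, Matrix.smul_mulVec, Matrix.one_mulVec]
    rw [Matrix.add_mulVec, ← Matrix.mulVec_mulVec, ← Matrix.mulVec_mulVec,
      hBv, hAv, Matrix.mulVec_neg, hAv, hBv] at h1
    exact h1.symm
  have hu0 : (2 * c - 2) • u = 0 := by
    rw [sub_smul, hcu, two_smul]; abel
  have hv0 : (2 * c + 2) • v = 0 := by
    rw [add_smul, hcv, two_smul]; abel
  rcases smul_eq_zero.mp hu0 with h1 | h1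
  · rcases smul_eq_zero.mp hv0 with h2 | h2
    · exfalso; have : c = 1 := by linarith
      have : c = -1 := by linarith
      linarith
    · left
      have : x - Pr.mulVec x = 0 := h2
      rw [sub_eq_zero] at this
      exact this.symm
  · right
    have h2 : x + Pr.mulVec x = 0 := h1
    exact eq_neg_of_add_eq_zero_right h2
end

section
/- For the Clifford system on O^{2k+2} ≅ R^{16k+16} given by P_0(u,v) = (u,-v) and P_α(u,v) = (E_α v, -E_α u) for α = 1,…,7 (where E_α multiplies each octonion coordinate on the left by e_α), the product satisfies P_0 P_1 ⋯ P_7 (u,v) = (v,u) for all u, v ∈ O^{k+1}. -/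
noncomputable section

def qi : Quaternion ℝ := ⟨0, 1, 0, 0⟩
def qj : Quaternion ℝ := ⟨0, 0, 1, 0⟩
def qk : Quaternion ℝ := ⟨0, 0, 0, 1⟩

/-- The standard imaginary basis units e₁,…,e₇ of the octonions. -/
def e : Fin 8 → Octo
  | 1 => (qi, 0)
  | 2 => (qj, 0)
  | 3 => (qk, 0)
  | 4 => (0, 1)
  | 5 => (0, qi)
  | 6 => (0, qj)
  | 7 => (0, qk)
  | _ => (1, 0)

variable (k : ℕ)

/-- Coordinatewise left multiplication by an octonion on `Octo^(k+1)`. -/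
def Emul (w : Octo) (u : Fin (k + 1) → Octo) : Fin (k + 1) → Octo :=
  fun i => omul w (u i)

/-- The Clifford system matrix `P₀` acting on `O^{k+1} × O^{k+1}`. -/
def P₀ (x : (Fin (k + 1) → Octo) × (Fin (k + 1) → Octo)) :
    (Fin (k + 1) → Octo) × (Fin (k + 1) → Octo) :=
  (x.1, -x.2)

/-- The Clifford system matrices `P_α`, `α = 1,…,7`. -/
def Pα (α : Fin 8) (x : (Fin (k + 1) → Octo) × (Fin (k + 1) → Octo)) :
    (Fin (k + 1) → Octo) × (Fin (k + 1) → Octo) :=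
  (Emul k (e α) x.2, -(Emul k (e α) x.1))

lemma oq_re_mul (a b : Quaternion ℝ) : (a * b).re = a.re * b.re - a.imI * b.imI - a.imJ * b.imJ - a.imK * b.imK := Quaternion.re_mul a b
lemma oq_re_add (a b : Quaternion ℝ) : (a + b).re = a.re + b.re := Quaternion.re_add a b
lemma oq_re_sub (a b : Quaternion ℝ) : (a - b).re = a.re - b.re := Quaternion.re_sub a b
lemma oq_re_neg (a : Quaternion ℝ) : (-a).re = -a.re := Quaternion.re_neg a
lemma oq_re_star (a : Quaternion ℝ) : (star a).re = a.re := Quaternion.re_star a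
lemma oq_re_zero : (0 : Quaternion ℝ).re = 0 := Quaternion.re_zero
lemma oq_re_one : (1 : Quaternion ℝ).re = 1 := Quaternion.re_one
lemma oq_imI_mul (a b : Quaternion ℝ) : (a * b).imI = a.re * b.imI + a.imI * b.re + a.imJ * b.imK - a.imK * b.imJ := Quaternion.imI_mul a b
lemma oq_imI_add (a b : Quaternion ℝ) : (a + b).imI = a.imI + b.imI := Quaternion.imI_add a b
lemma oq_imI_sub (a b : Quaternion ℝ) : (a - b).imI = a.imI - b.imI := Quaternion.imI_sub a b
lemma oq_imI_neg (a : Quaternion ℝ) : (-a).imI = -a.imI := Quaternion.imI_neg a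
lemma oq_imI_star (a : Quaternion ℝ) : (star a).imI = -a.imI := Quaternion.imI_star a
lemma oq_imI_zero : (0 : Quaternion ℝ).imI = 0 := Quaternion.imI_zero
lemma oq_imI_one : (1 : Quaternion ℝ).imI = 0 := Quaternion.imI_one
lemma oq_imJ_mul (a b : Quaternion ℝ) : (a * b).imJ = a.re * b.imJ - a.imI * b.imK + a.imJ * b.re + a.imK * b.imI := Quaternion.imJ_mul a b
lemma oq_imJ_add (a b : Quaternion ℝ) : (a + b).imJ = a.imJ + b.imJ := Quaternion.imJ_add a b
lemma oq_imJ_sub (a b : Quaternion ℝ) : (a - b).imJ = a.imJ - b.imJ := Quaternion.imJ_sub a b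
lemma oq_imJ_neg (a : Quaternion ℝ) : (-a).imJ = -a.imJ := Quaternion.imJ_neg a
lemma oq_imJ_star (a : Quaternion ℝ) : (star a).imJ = -a.imJ := Quaternion.imJ_star a
lemma oq_imJ_zero : (0 : Quaternion ℝ).imJ = 0 := Quaternion.imJ_zero
lemma oq_imJ_one : (1 : Quaternion ℝ).imJ = 0 := Quaternion.imJ_one
lemma oq_imK_mul (a b : Quaternion ℝ) : (a * b).imK = a.re * b.imK + a.imI * b.imJ - a.imJ * b.imI + a.imK * b.re := Quaternion.imK_mul a b
lemma oq_imK_add (a b : Quaternion ℝ) : (a + b).imK = a.imK + b.imK := Quaternion.imK_add a b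
lemma oq_imK_sub (a b : Quaternion ℝ) : (a - b).imK = a.imK - b.imK := Quaternion.imK_sub a b
lemma oq_imK_neg (a : Quaternion ℝ) : (-a).imK = -a.imK := Quaternion.imK_neg a
lemma oq_imK_star (a : Quaternion ℝ) : (star a).imK = -a.imK := Quaternion.imK_star a
lemma oq_imK_zero : (0 : Quaternion ℝ).imK = 0 := Quaternion.imK_zero
lemma oq_imK_one : (1 : Quaternion ℝ).imK = 0 := Quaternion.imK_one

def oqmk (a b c d : ℝ) : Quaternion ℝ := ⟨a, b, c, d⟩
lemma oqmk_eq (a b c d : ℝ) : (⟨a, b, c, d⟩ : Quaternion ℝ) = oqmk a b c d := rfl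
lemma oqmk_re (a b c d : ℝ) : (oqmk a b c d).re = a := rfl
lemma oqmk_imI (a b c d : ℝ) : (oqmk a b c d).imI = b := rfl
lemma oqmk_imJ (a b c d : ℝ) : (oqmk a b c d).imJ = c := rfl
lemma oqmk_imK (a b c d : ℝ) : (oqmk a b c d).imK = d := rfl

lemma step1 (p1 p2 p3 p4 q1 q2 q3 q4 : ℝ) :
    omul (e 1) ((⟨p1,p2,p3,p4⟩, ⟨q1,q2,q3,q4⟩) : Octo)
      = (⟨-p2, p1, -p4, p3⟩, ⟨-q2, q1, q4, -q3⟩) := by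
  simp only [omul, e, qi, qj, qk]
  refine Prod.ext ?_ ?_ <;> apply Quaternion.ext <;>
    simp [oqmk_eq, oqmk_re, oqmk_imI, oqmk_imJ, oqmk_imK, oq_re_mul, oq_re_add, oq_re_sub, oq_re_neg, oq_re_star, oq_re_zero, oq_re_one, oq_imI_mul, oq_imI_add, oq_imI_sub, oq_imI_neg, oq_imI_star, oq_imI_zero, oq_imI_one, oq_imJ_mul, oq_imJ_add, oq_imJ_sub, oq_imJ_neg, oq_imJ_star, oq_imJ_zero, oq_imJ_one, oq_imK_mul, oq_imK_add, oq_imK_sub, oq_imK_neg, oq_imK_star, oq_imK_zero, oq_imK_one] <;> ring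

lemma step2 (p1 p2 p3 p4 q1 q2 q3 q4 : ℝ) :
    omul (e 2) ((⟨p1,p2,p3,p4⟩, ⟨q1,q2,q3,q4⟩) : Octo)
      = (⟨-p3, p4, p1, -p2⟩, ⟨-q3, -q4, q1, q2⟩) := by
  simp only [omul, e, qi, qj, qk]
  refine Prod.ext ?_ ?_ <;> apply Quaternion.ext <;>
    simp [oqmk_eq, oqmk_re, oqmk_imI, oqmk_imJ, oqmk_imK, oq_re_mul, oq_re_add, oq_re_sub, oq_re_neg, oq_re_star, oq_re_zero, oq_re_one, oq_imI_mul, oq_imI_add, oq_imI_sub, oq_imI_neg, oq_imI_star, oq_imI_zero, oq_imI_one, oq_imJ_mul, oq_imJ_add, oq_imJ_sub, oq_imJ_neg, oq_imJ_star, oq_imJ_zero, oq_imJ_one, oq_imK_mul, oq_imK_add, oq_imK_sub, oq_imK_neg, oq_imK_star, oq_imK_zero, oq_imK_one] <;> ring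

lemma step3 (p1 p2 p3 p4 q1 q2 q3 q4 : ℝ) :
    omul (e 3) ((⟨p1,p2,p3,p4⟩, ⟨q1,q2,q3,q4⟩) : Octo)
      = (⟨-p4, -p3, p2, p1⟩, ⟨-q4, q3, -q2, q1⟩) := by
  simp only [omul, e, qi, qj, qk]
  refine Prod.ext ?_ ?_ <;> apply Quaternion.ext <;>
    simp [oqmk_eq, oqmk_re, oqmk_imI, oqmk_imJ, oqmk_imK, oq_re_mul, oq_re_add, oq_re_sub, oq_re_neg, oq_re_star, oq_re_zero, oq_re_one, oq_imI_mul, oq_imI_add, oq_imI_sub, oq_imI_neg, oq_imI_star, oq_imI_zero, oq_imI_one, oq_imJ_mul, oq_imJ_add, oq_imJ_sub, oq_imJ_neg, oq_imJ_star, oq_imJ_zero, oq_imJ_one, oq_imK_mul, oq_imK_add, oq_imK_sub, oq_imK_neg, oq_imK_star, oq_imK_zero, oq_imK_one] <;> ring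

lemma step4 (p1 p2 p3 p4 q1 q2 q3 q4 : ℝ) :
    omul (e 4) ((⟨p1,p2,p3,p4⟩, ⟨q1,q2,q3,q4⟩) : Octo)
      = (⟨-q1, q2, q3, q4⟩, ⟨p1, -p2, -p3, -p4⟩) := by
  simp only [omul, e, qi, qj, qk]
  refine Prod.ext ?_ ?_ <;> apply Quaternion.ext <;>
    simp [oqmk_eq, oqmk_re, oqmk_imI, oqmk_imJ, oqmk_imK, oq_re_mul, oq_re_add, oq_re_sub, oq_re_neg, oq_re_star, oq_re_zero, oq_re_one, oq_imI_mul, oq_imI_add, oq_imI_sub, oq_imI_neg, oq_imI_star, oq_imI_zero, oq_imI_one, oq_imJ_mul, oq_imJ_add, oq_imJ_sub, oq_imJ_neg, oq_imJ_star, oq_imJ_zero, oq_imJ_one, oq_imK_mul, oq_imK_add, oq_imK_sub, oq_imK_neg, oq_imK_star, oq_imK_zero, oq_imK_one] <;> ring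

lemma step5 (p1 p2 p3 p4 q1 q2 q3 q4 : ℝ) :
    omul (e 5) ((⟨p1,p2,p3,p4⟩, ⟨q1,q2,q3,q4⟩) : Octo)
      = (⟨-q2, -q1, q4, -q3⟩, ⟨p2, p1, p4, -p3⟩) := by
  simp only [omul, e, qi, qj, qk]
  refine Prod.ext ?_ ?_ <;> apply Quaternion.ext <;>
    simp [oqmk_eq, oqmk_re, oqmk_imI, oqmk_imJ, oqmk_imK, oq_re_mul, oq_re_add, oq_re_sub, oq_re_neg, oq_re_star, oq_re_zero, oq_re_one, oq_imI_mul, oq_imI_add, oq_imI_sub, oq_imI_neg, oq_imI_star, oq_imI_zero, oq_imI_one, oq_imJ_mul, oq_imJ_add, oq_imJ_sub, oq_imJ_neg, oq_imJ_star, oq_imJ_zero, oq_imJ_one, oq_imK_mul, oq_imK_add, oq_imK_sub, oq_imK_neg, oq_imK_star, oq_imK_zero, oq_imK_one] <;> ring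

lemma step6 (p1 p2 p3 p4 q1 q2 q3 q4 : ℝ) :
    omul (e 6) ((⟨p1,p2,p3,p4⟩, ⟨q1,q2,q3,q4⟩) : Octo)
      = (⟨-q3, -q4, -q1, q2⟩, ⟨p3, -p4, p1, p2⟩) := by
  simp only [omul, e, qi, qj, qk]
  refine Prod.ext ?_ ?_ <;> apply Quaternion.ext <;>
    simp [oqmk_eq, oqmk_re, oqmk_imI, oqmk_imJ, oqmk_imK, oq_re_mul, oq_re_add, oq_re_sub, oq_re_neg, oq_re_star, oq_re_zero, oq_re_one, oq_imI_mul, oq_imI_add, oq_imI_sub, oq_imI_neg, oq_imI_star, oq_imI_zero, oq_imI_one, oq_imJ_mul, oq_imJ_add, oq_imJ_sub, oq_imJ_neg, oq_imJ_star, oq_imJ_zero, oq_imJ_one, oq_imK_mul, oq_imK_add, oq_imK_sub, oq_imK_neg, oq_imK_star, oq_imK_zero, oq_imK_one] <;> ring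

lemma step7 (p1 p2 p3 p4 q1 q2 q3 q4 : ℝ) :
    omul (e 7) ((⟨p1,p2,p3,p4⟩, ⟨q1,q2,q3,q4⟩) : Octo)
      = (⟨-q4, q3, -q2, -q1⟩, ⟨p4, p3, -p2, p1⟩) := by
  simp only [omul, e, qi, qj, qk]
  refine Prod.ext ?_ ?_ <;> apply Quaternion.ext <;>
    simp [oqmk_eq, oqmk_re, oqmk_imI, oqmk_imJ, oqmk_imK, oq_re_mul, oq_re_add, oq_re_sub, oq_re_neg, oq_re_star, oq_re_zero, oq_re_one, oq_imI_mul, oq_imI_add, oq_imI_sub, oq_imI_neg, oq_imI_star, oq_imI_zero, oq_imI_one, oq_imJ_mul, oq_imJ_add, oq_imJ_sub, oq_imJ_neg, oq_imJ_star, oq_imJ_zero, oq_imJ_one, oq_imK_mul, oq_imK_add, oq_imK_sub, oq_imK_neg, oq_imK_star, oq_imK_zero, oq_imK_one] <;> ring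


lemma omul_neg (x y : Octo) : omul x (-y) = -omul x y := by
  obtain ⟨y1,y2⟩ := y
  simp only [omul, Prod.neg_mk, Prod.mk.injEq, star_neg, mul_neg, neg_mul]
  constructor <;> abel

lemma key_s16 (a1 a2 a3 a4 b1 b2 b3 b4 : ℝ) :
    omul (e 1) (omul (e 2) (omul (e 3) (omul (e 4) (omul (e 5) (omul (e 6)
      (omul (e 7) ((⟨a1,a2,a3,a4⟩, ⟨b1,b2,b3,b4⟩) : Octo)))))))
      = -((⟨a1,a2,a3,a4⟩, ⟨b1,b2,b3,b4⟩) : Octo) := by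
  rw [step7, step6, step5, step4, step3, step2, step1]
  refine Prod.ext ?_ ?_ <;> apply Quaternion.ext <;> simp [oqmk_eq, oqmk_re, oqmk_imI, oqmk_imJ, oqmk_imK, oq_re_mul, oq_re_add, oq_re_sub, oq_re_neg, oq_re_star, oq_re_zero, oq_re_one, oq_imI_mul, oq_imI_add, oq_imI_sub, oq_imI_neg, oq_imI_star, oq_imI_zero, oq_imI_one, oq_imJ_mul, oq_imJ_add, oq_imJ_sub, oq_imJ_neg, oq_imJ_star, oq_imJ_zero, oq_imJ_one, oq_imK_mul, oq_imK_add, oq_imK_sub, oq_imK_neg, oq_imK_star, oq_imK_zero, oq_imK_one] <;> ring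

lemma key' (x : Octo) :
    omul (e 1) (omul (e 2) (omul (e 3) (omul (e 4) (omul (e 5) (omul (e 6)
      (omul (e 7) x)))))) = -x := by
  obtain ⟨⟨a1,a2,a3,a4⟩, ⟨b1,b2,b3,b4⟩⟩ := x
  exact key_s16 a1 a2 a3 a4 b1 b2 b3 b4

theorem stmt16 (u v : Fin (k + 1) → Octo) :
    P₀ k (Pα k 1 (Pα k 2 (Pα k 3 (Pα k 4 (Pα k 5 (Pα k 6 (Pα k 7 (u, v))))))))
      = (v, u) := by
  refine Prod.ext ?_ ?_ <;> funext i <;>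
    simp only [P₀, Pα, Emul, Pi.neg_apply, omul_neg, key', neg_neg]
end
end
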